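/- arXiv:1504.02865 — 7 statements merged into one kernel-verified Lean document; each statement's English description precedes it below -/
import Mathlib

section
/- The cubic equation ς³ + (1 - k·q)·ς² - σ = 0 with σ > 0 and 0 < k < 1/3 has a negative real root if and only if q ≤ (1/k)·(1 - 3·(σ/4)^(1/3)). -/
/-!
Substituting `ς = -t` turns the equation into `t² (a - t) = σ` with `a = 1 - k q`. On `t > 0`
the left side peaks at `t = 2a/3` with value `4a³/27`, so a negative root exists exactly when
`27 σ ≤ 4 a³`, i.e. when `3 (σ/4)^(1/3) ≤ a`.
-/

lemma four_mul_cube_sub_cubic (a ς : ℝ) :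
    4 * a ^ 3 - 27 * (ς ^ 3 + a * ς ^ 2) = (3 * ς + 2 * a) ^ 2 * (a - 3 * ς) := by
  ring

lemma exists_neg_root_cubic_iff {a σ : ℝ} (hσ : 0 < σ) :
    (∃ ς : ℝ, ς < 0 ∧ ς ^ 3 + a * ς ^ 2 - σ = 0) ↔ 27 * σ ≤ 4 * a ^ 3 := by
  constructor
  · rintro ⟨ς, hς, hroot⟩
    have hpos : 0 < ς ^ 2 * (ς + a) := by linarith [hroot]
    have ha : 0 < ς + a := pos_of_mul_pos_right hpos (sq_nonneg ς)
    nlinarith [four_mul_cube_sub_cubic a ς, sq_nonneg (3 * ς + 2 * a)]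
  · intro hdisc
    set f : ℝ → ℝ := fun x => x ^ 3 + a * x ^ 2 - σ
    have ha : 0 < a := by
      by_contra! ha
      nlinarith [pow_nonneg (neg_nonneg.2 ha) 3]
    have hf0 : f 0 = -σ := by simp [f]
    -- `f` attains its local maximum `4a³/27 - σ` on the negative axis at `-2a/3`
    have hfmax : f (-(2 * a / 3)) = 4 * a ^ 3 / 27 - σ := by simp only [f]; ring
    have hmem : (0 : ℝ) ∈ Set.Ioc (f 0) (f (-(2 * a / 3))) := by
      rw [hf0, hfmax]; constructor <;> linarith
    obtain ⟨ς, ⟨-, hς⟩, hroot⟩ :=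
      intermediate_value_Ico' (by linarith) (by fun_prop : Continuous f).continuousOn hmem
    exact ⟨ς, hς, hroot⟩

lemma le_cube_iff_cbrt_le {a σ : ℝ} (hσ : 0 ≤ σ) :
    27 * σ ≤ 4 * a ^ 3 ↔ 3 * (σ / 4) ^ ((1 : ℝ) / 3) ≤ a := by
  have hcube : (3 * (σ / 4) ^ ((1 : ℝ) / 3)) ^ 3 = 27 * σ / 4 := by
    have := Real.rpow_inv_natCast_pow (x := σ / 4) (by positivity) (n := 3) (by norm_num)
    rw [mul_pow, one_div, ← Nat.cast_ofNat, this]; ring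
  rw [← (Odd.strictMono_pow (R := ℝ) (by decide : Odd 3)).le_iff_le
    (a := 3 * (σ / 4) ^ ((1 : ℝ) / 3)), hcube]
  constructor <;> intro h <;> linarith

theorem stmt_1_general (k q σ : ℝ) (hk : 0 < k) (hσ : 0 < σ) :
    (∃ ς : ℝ, ς < 0 ∧ ς^3 + (1 - k*q)*ς^2 - σ = 0) ↔
      q ≤ (1/k) * (1 - 3 * (σ/4) ^ ((1:ℝ)/3)) := by
  rw [exists_neg_root_cubic_iff hσ, le_cube_iff_cbrt_le hσ.le, one_div_mul_eq_div,
    le_div_iff₀ hk]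
  constructor <;> intro h <;> linarith

theorem stmt_1 (k q σ : ℝ) (hk : 0 < k) (hk' : k < 1/3) (hσ : 0 < σ) :
    (∃ ς : ℝ, ς < 0 ∧ ς^3 + (1 - k*q)*ς^2 - σ = 0) ↔
      q ≤ (1/k) * (1 - 3 * (σ/4) ^ ((1:ℝ)/3)) :=
  stmt_1_general k q σ hk hσ
end

section
/- The cubic equation ς³ + (1 - k·q)·ς² - σ = 0 with σ > 0 and 0 < k < 1/3 has exactly one negative real root if and only if q = (1/k)·(1 - 3·(σ/4)^(1/3)). -/
/-!
The equation `x³ + A x² = σ` reads `x² (x + A) = σ > 0`, which forces `-x < A`.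
On `(-A, 0)` the function `x² (x + A)` rises from `0` to its maximum `4A³/27` at `x = -2A/3` and
falls back to `0`, so there is one negative root when `27σ = 4A³`, two when `27σ < 4A³` and none
otherwise. With `σ = 4c³` the double-root case is `A = 3c`, where the cubic is `(x - c)(x + 2c)²`.
-/

lemma neg_lt_of_cubic_eq_zero {A σ x : ℝ} (hσ : 0 < σ)
    (hroot : x ^ 3 + A * x ^ 2 - σ = 0) : -x < A := by
  nlinarith [sq_nonneg x]

/-- `4A³ - 27(x³ + A x²) = (3x + 2A)² (A - 3x)`. -/
lemma cubic_le_of_three_mul_le {A x : ℝ} (hx : 3 * x ≤ A) :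
    27 * (x ^ 3 + A * x ^ 2) ≤ 4 * A ^ 3 := by
  nlinarith [mul_nonneg (sq_nonneg (3 * x + 2 * A)) (sub_nonneg.2 hx)]

lemma exists_two_neg_roots_of_lt {A σ : ℝ} (hσ : 0 < σ) (hlt : 27 * σ < 4 * A ^ 3) :
    ∃ y z : ℝ, y < z ∧ z < 0 ∧
      y ^ 3 + A * y ^ 2 - σ = 0 ∧ z ^ 3 + A * z ^ 2 - σ = 0 := by
  have hA : 0 < A := (Odd.pow_pos_iff (by decide : Odd 3)).1 (by linarith)
  have hf : Continuous fun t : ℝ => t ^ 3 + A * t ^ 2 - σ := by fun_prop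
  obtain ⟨y, hy, hfy⟩ := intermediate_value_Ioo (by linarith : -A ≤ -(2 * A / 3)) hf.continuousOn
    (show (0 : ℝ) ∈ Set.Ioo _ _ by constructor <;> nlinarith)
  obtain ⟨z, hz, hfz⟩ := intermediate_value_Ioo' (by linarith : -(2 * A / 3) ≤ 0) hf.continuousOn
    (show (0 : ℝ) ∈ Set.Ioo _ _ by constructor <;> nlinarith)
  exact ⟨y, z, hy.2.trans hz.1, hz.2, hfy, hfz⟩

lemma existsUnique_neg_root_iff {A c : ℝ} (hc : 0 < c) :
    (∃! x : ℝ, x < 0 ∧ x ^ 3 + A * x ^ 2 - 4 * c ^ 3 = 0) ↔ A = 3 * c := by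
  constructor
  · rintro ⟨x, ⟨hx, hroot⟩, huniq⟩
    have hxA := neg_lt_of_cubic_eq_zero (by positivity) hroot
    have hle := cubic_le_of_three_mul_le (A := A) (x := x) (by linarith)
    have heq : 27 * (4 * c ^ 3) = 4 * A ^ 3 := by
      refine (show 27 * (4 * c ^ 3) ≤ 4 * A ^ 3 by linarith).lt_or_eq.resolve_left fun hlt => ?_
      obtain ⟨y, z, hyz, hz, hy0, hz0⟩ := exists_two_neg_roots_of_lt (by positivity) hlt
      exact hyz.ne ((huniq y ⟨hyz.trans hz, hy0⟩).trans (huniq z ⟨hz, hz0⟩).symm)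
    exact (pow_left_inj₀ (by linarith) (by positivity) three_ne_zero).1
      (by linear_combination -heq / 4)
  · rintro rfl
    refine ⟨-2 * c, ⟨by linarith, by ring⟩, fun y ⟨hy, hroot⟩ => ?_⟩
    have hfactor : (y - c) * (y + 2 * c) ^ 2 = 0 := by linear_combination hroot
    rcases mul_eq_zero.1 hfactor with h | h
    · linarith
    · linarith [pow_eq_zero_iff two_ne_zero |>.1 h]

theorem stmt_2_general (k q σ : ℝ) (hk : 0 < k) (hσ : 0 < σ) :
    (∃! ς : ℝ, ς < 0 ∧ ς^3 + (1 - k*q)*ς^2 - σ = 0) ↔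
      q = (1/k) * (1 - 3 * (σ/4) ^ ((1:ℝ)/3)) := by
  have hc : 0 < (σ/4) ^ ((1:ℝ)/3) := by positivity
  have hσc : σ = 4 * ((σ/4) ^ ((1:ℝ)/3)) ^ 3 := by
    rw [← Real.rpow_natCast, ← Real.rpow_mul (by positivity)]
    norm_num
    ring
  generalize (σ/4) ^ ((1:ℝ)/3) = c at hc hσc ⊢
  subst hσc
  rw [existsUnique_neg_root_iff hc, one_div_mul_eq_div, eq_div_iff hk.ne']
  constructor <;> intro h <;> linarith

theorem stmt_2 (k q σ : ℝ) (hk : 0 < k) (hk' : k < 1/3) (hσ : 0 < σ) :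
    (∃! ς : ℝ, ς < 0 ∧ ς^3 + (1 - k*q)*ς^2 - σ = 0) ↔
      q = (1/k) * (1 - 3 * (σ/4) ^ ((1:ℝ)/3)) :=
  stmt_2_general k q σ hk hσ
end

section
/- For fixed σ > 0 and 0 < k < 1/3, the map ς ↦ q(ς) = (ς³ + ς² - σ)/(k·ς²) restricted to (-(2σ)^(1/3), 0) is a bijection onto (-∞, (1/k)·(1 - 3·(σ/4)^(1/3))). -/
/-!
With `c = (2σ)^(1/3)`, the derivative `q' ς = (ς³ + 2σ)/(k ς³)` is negative on `(-c, 0)`, so `q` is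
strictly decreasing there; it tends to `-∞` as `ς → 0⁻` and `q (-c) = (1 - 3c/2)/k`, where
`c/2 = (σ/4)^(1/3)`. By the intermediate value theorem the image of `(-c, 0)` is `(-∞, q (-c))`.
-/

open Filter Set Topology

theorem StrictAntiOn.bijOn_Ioo_Iio {α δ : Type*} [ConditionallyCompleteLinearOrder α]
    [TopologicalSpace α] [OrderTopology α] [DenselyOrdered α] [LinearOrder δ]
    [TopologicalSpace δ] [OrderClosedTopology δ] {f : α → δ} {a b : α} (hab : a < b)
    (hf : StrictAntiOn f (Ico a b)) (hcont : ContinuousOn f (Ico a b))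
    (hlim : Tendsto f (𝓝[<] b) atBot) :
    BijOn f (Ioo a b) (Iio (f a)) := by
  refine ⟨fun x hx => hf (left_mem_Ico.2 hab) (Ioo_subset_Ico_self hx) hx.1,
    hf.injOn.mono Ioo_subset_Ico_self, fun y hy => ?_⟩
  have := nhdsLT_neBot_of_exists_lt ⟨a, hab⟩
  obtain ⟨x, hfx, hx⟩ :=
    ((hlim.eventually (eventually_le_atBot y)).and (Ioo_mem_nhdsLT hab)).exists
  obtain ⟨z, hz, rfl⟩ := intermediate_value_Ioc' hx.1.le
    (hcont.mono (Icc_subset_Ico_right hx.2)) ⟨hfx, hy⟩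
  exact ⟨z, ⟨hz.1, hz.2.trans_lt hx.2⟩, rfl⟩

noncomputable def q (k σ ς : ℝ) : ℝ := (ς ^ 3 + ς ^ 2 - σ) / (k * ς ^ 2)

section
variable {k σ ς : ℝ}

theorem hasDerivAt_q (hk : k ≠ 0) (hς : ς ≠ 0) :
    HasDerivAt (q k σ) ((ς ^ 3 + 2 * σ) / (k * ς ^ 3)) ς := by
  have hnum : HasDerivAt (fun x => x ^ 3 + x ^ 2 - σ) (3 * ς ^ 2 + 2 * ς) ς := by
    simpa using ((hasDerivAt_pow 3 ς).add (hasDerivAt_pow 2 ς)).sub_const σ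
  have hden : HasDerivAt (fun x => k * x ^ 2) (k * (2 * ς)) ς := by
    simpa using (hasDerivAt_pow 2 ς).const_mul k
  refine (hnum.fun_div hden (by positivity)).congr_deriv ?_
  field_simp
  ring

theorem continuousOn_q (hk : k ≠ 0) {s : Set ℝ} (hs : (0 : ℝ) ∉ s) : ContinuousOn (q k σ) s :=
  fun _ hx => (hasDerivAt_q hk (ne_of_mem_of_not_mem hx hs)).continuousAt.continuousWithinAt

theorem strictAntiOn_q (hk : 0 < k) {c : ℝ} (hc : c ^ 3 = 2 * σ) :
    StrictAntiOn (q k σ) (Ico (-c) 0) := by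
  refine strictAntiOn_of_hasDerivWithinAt_neg (f' := fun x => (x ^ 3 + 2 * σ) / (k * x ^ 3))
    (convex_Ico _ _) (continuousOn_q hk.ne' fun h => h.2.false) (fun x hx => ?_) (fun x hx => ?_)
  · exact (hasDerivAt_q hk.ne' (interior_subset hx).2.ne).hasDerivWithinAt
  · rw [interior_Ico] at hx
    have hx3 : -(2 * σ) < x ^ 3 := by
      rw [← hc, ← Odd.neg_pow (by decide)]
      exact Odd.strictMono_pow (by decide) hx.1
    have hx3' : x ^ 3 < 0 := Odd.pow_neg (by decide) hx.2
    exact div_neg_of_pos_of_neg (by linarith) (mul_neg_of_pos_of_neg hk hx3')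

theorem q_neg_of_pow_three_eq (hk : k ≠ 0) {c : ℝ} (hc0 : c ≠ 0) (hc : c ^ 3 = 2 * σ) :
    q k σ (-c) = 1 / k * (1 - 3 * (c / 2)) := by
  unfold q
  field_simp
  linear_combination hc

theorem tendsto_q_nhdsLT_zero (hk : 0 < k) (hσ : 0 < σ) : Tendsto (q k σ) (𝓝[<] 0) atBot := by
  have hnum : Tendsto (fun x : ℝ => x ^ 3 + x ^ 2 - σ) (𝓝[<] 0) (𝓝 (-σ)) := by
    refine tendsto_nhdsWithin_of_tendsto_nhds ?_
    have : Continuous (fun x : ℝ => x ^ 3 + x ^ 2 - σ) := by fun_prop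
    simpa using this.tendsto 0
  have hden : Tendsto (fun x : ℝ => k * x ^ 2) (𝓝[<] 0) (𝓝[>] 0) := by
    refine tendsto_nhdsWithin_iff.2 ⟨tendsto_nhdsWithin_of_tendsto_nhds ?_, ?_⟩
    · simpa using ((continuous_pow 2).const_mul k).tendsto 0
    · filter_upwards [self_mem_nhdsWithin] with x hx
      exact mul_pos hk (sq_pos_of_neg hx)
  exact (hnum.neg_mul_atTop (neg_neg_of_pos hσ) (tendsto_inv_nhdsGT_zero.comp hden)).congr
    fun x => (div_eq_mul_inv _ _).symm

end

theorem stmt_11_general (k σ : ℝ) (hk : 0 < k) (hσ : 0 < σ) :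
    Set.BijOn (fun ς : ℝ => (ς^3 + ς^2 - σ) / (k * ς^2))
      (Set.Ioo (-(2*σ) ^ ((1:ℝ)/3)) 0)
      (Set.Iio ((1/k) * (1 - 3 * (σ/4) ^ ((1:ℝ)/3)))) := by
  have hc : ((2 * σ) ^ ((1 : ℝ) / 3)) ^ 3 = 2 * σ := by
    rw [show (1 : ℝ) / 3 = ((3 : ℕ) : ℝ)⁻¹ by norm_num]
    exact Real.rpow_inv_natCast_pow (by positivity) three_ne_zero
  have hc2 : (2 * σ) ^ ((1 : ℝ) / 3) / 2 = (σ / 4) ^ ((1 : ℝ) / 3) := by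
    rw [show σ / 4 = 2 * σ / 2 ^ 3 by ring, Real.div_rpow (by positivity) (by positivity),
      show (1 : ℝ) / 3 = ((3 : ℕ) : ℝ)⁻¹ by norm_num,
      Real.pow_rpow_inv_natCast zero_le_two three_ne_zero]
  set c := (2 * σ) ^ ((1 : ℝ) / 3)
  have hc0 : 0 < c := by positivity
  have h := (strictAntiOn_q hk hc).bijOn_Ioo_Iio (neg_lt_zero.2 hc0)
    (continuousOn_q hk.ne' fun h => h.2.false) (tendsto_q_nhdsLT_zero hk hσ)
  rwa [q_neg_of_pow_three_eq hk.ne' hc0.ne' hc, hc2] at h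

theorem stmt_11 (k σ : ℝ) (hk : 0 < k) (hk' : k < 1/3) (hσ : 0 < σ) :
    Set.BijOn (fun ς : ℝ => (ς^3 + ς^2 - σ) / (k * ς^2))
      (Set.Ioo (-(2*σ) ^ ((1:ℝ)/3)) 0)
      (Set.Iio ((1/k) * (1 - 3 * (σ/4) ^ ((1:ℝ)/3)))) :=
  stmt_11_general k σ hk hσ
end

section
/- Along the positive branch ς¹(q, σ) of ς³ + (1 - k·q)·ς² = σ (σ > 0, 0 < k < 1/3), the function ς̄¹(q) = ς¹(q, σ) - q/3 has derivative dς̄¹/dq = -((1 - 3k)·(ς¹)³ + 2σ)/(3·((ς¹)³ + 2σ)), which is strictly negative; hence ς̄¹ is strictly decreasing in q. -/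
/-!
On the positive branch the equation can be solved for `q`: a root `ς > 0` determines
`q = (ς + 1 - σ / ς²) / k`, and this inverse map is strictly increasing on `(0, ∞)` with
derivative `(ς³ + 2σ) / (k ς³) > 0`. Hence the branch is a monotone bijection onto `(0, ∞)`,
so it is continuous, and the inverse function theorem gives `dς¹/dq = k ς³ / (ς³ + 2σ)`.
Subtracting `1/3` leaves `-((1 - 3k) ς³ + 2σ) / (3 (ς³ + 2σ))`, which is negative as `k < 1/3`.
-/

open Set Filter Function

theorem Continuous.of_leftInverse_strictMonoOn {α β : Type*} [LinearOrder α] [TopologicalSpace α]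
    [OrderTopology α] [LinearOrder β] [TopologicalSpace β] [OrderTopology β] [DenselyOrdered β]
    {f : α → β} {g : β → α} {s : Set β} (hs : IsOpen s) (hf : ∀ x, f x ∈ s)
    (hg : StrictMonoOn g s) (hgf : LeftInverse g f) : Continuous f := by
  have hmono : Monotone f := fun a b hab =>
    (hg.le_iff_le (hf a) (hf b)).mp (by rwa [hgf a, hgf b])
  have hsurj : s ⊆ range f := fun c hc => ⟨g c, hg.injOn (hf _) hc (hgf (g c))⟩
  refine continuous_iff_continuousAt.mpr fun a => ?_
  refine continuousAt_of_monotoneOn_of_image_mem_nhds (hmono.monotoneOn univ) univ_mem ?_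
  rw [image_univ]
  exact mem_of_superset (hs.mem_nhds (hf a)) hsurj

/-- The inverse `ς ↦ q` of the positive branch of `ς³ + (1 - k q) ς² = σ`. -/
noncomputable def branchInv (k σ ς : ℝ) : ℝ := (ς + 1 - σ / ς ^ 2) / k

theorem branchInv_eq_of_root {k σ q ς : ℝ} (hk : k ≠ 0) (hς : ς ≠ 0)
    (hroot : ς ^ 3 + (1 - k * q) * ς ^ 2 - σ = 0) : branchInv k σ ς = q := by
  unfold branchInv
  field_simp
  linear_combination hroot

theorem strictMonoOn_branchInv {k σ : ℝ} (hk : 0 < k) (hσ : 0 ≤ σ) :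
    StrictMonoOn (branchInv k σ) (Ioi 0) := by
  intro a ha b _ hab
  have hsq : σ / b ^ 2 ≤ σ / a ^ 2 :=
    div_le_div_of_nonneg_left hσ (pow_pos ha 2) (pow_le_pow_left₀ (le_of_lt ha) hab.le 2)
  exact div_lt_div_of_pos_right (by linarith) hk

theorem hasDerivAt_branchInv (k σ : ℝ) {ς : ℝ} (hς : ς ≠ 0) :
    HasDerivAt (branchInv k σ) ((ς ^ 3 + 2 * σ) / (k * ς ^ 3)) ς := by
  have hsq : HasDerivAt (fun x : ℝ => x ^ 2) (2 * ς) ς := by simpa using hasDerivAt_pow 2 ς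
  have hinv : HasDerivAt (fun x : ℝ => (x ^ 2)⁻¹) (-(2 * ς) / (ς ^ 2) ^ 2) ς :=
    hsq.inv (pow_ne_zero 2 hς)
  have h := (((hasDerivAt_id ς).add_const 1).sub (hinv.const_mul σ)).div_const k
  refine h.congr_deriv (by field_simp; ring) |>.congr_of_eventuallyEq (.of_forall fun x => ?_)
  simp [branchInv, div_eq_mul_inv]

theorem hasDerivAt_of_pos_root {k σ : ℝ} (hk : 0 < k) (hσ : 0 < σ) {ς₁ : ℝ → ℝ}
    (hpos : ∀ q, 0 < ς₁ q) (hroot : ∀ q, (ς₁ q) ^ 3 + (1 - k * q) * (ς₁ q) ^ 2 - σ = 0) (q : ℝ) :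
    HasDerivAt ς₁ (k * (ς₁ q) ^ 3 / ((ς₁ q) ^ 3 + 2 * σ)) q := by
  have hinv : LeftInverse (branchInv k σ) ς₁ := fun q =>
    branchInv_eq_of_root hk.ne' (hpos q).ne' (hroot q)
  have hcont : Continuous ς₁ :=
    .of_leftInverse_strictMonoOn isOpen_Ioi hpos (strictMonoOn_branchInv hk hσ.le) hinv
  have hς := hpos q
  have hne : (ς₁ q ^ 3 + 2 * σ) / (k * ς₁ q ^ 3) ≠ 0 := by positivity
  simpa only [inv_div] using HasDerivAt.of_local_left_inverse hcont.continuousAt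
    (hasDerivAt_branchInv k σ hς.ne') hne (Eventually.of_forall hinv)

theorem slope_sub_third_eq {k σ ς : ℝ} (hσ : 0 < σ) (hς : 0 < ς) :
    k * ς ^ 3 / (ς ^ 3 + 2 * σ) - 1 / 3 =
      -((1 - 3 * k) * ς ^ 3 + 2 * σ) / (3 * (ς ^ 3 + 2 * σ)) := by
  have : ς ^ 3 + 2 * σ ≠ 0 := by positivity
  field_simp
  ring

theorem slope_sub_third_neg {k σ ς : ℝ} (hk' : k < 1 / 3) (hσ : 0 < σ) (hς : 0 < ς) :
    -((1 - 3 * k) * ς ^ 3 + 2 * σ) / (3 * (ς ^ 3 + 2 * σ)) < 0 := by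
  have hnum : 0 < (1 - 3 * k) * ς ^ 3 + 2 * σ := by
    have : 0 < 1 - 3 * k := by linarith
    positivity
  exact div_neg_of_neg_of_pos (neg_neg_of_pos hnum) (by positivity)

theorem stmt_13 (k σ : ℝ) (hk : 0 < k) (hk' : k < 1/3) (hσ : 0 < σ)
    (ς₁ : ℝ → ℝ)
    (hpos : ∀ q, 0 < ς₁ q)
    (hroot : ∀ q, (ς₁ q)^3 + (1 - k*q)*(ς₁ q)^2 - σ = 0) :
    (∀ q, HasDerivAt (fun q => ς₁ q - q/3)
        (-((1 - 3*k)*(ς₁ q)^3 + 2*σ) / (3*((ς₁ q)^3 + 2*σ))) q ∧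
      -((1 - 3*k)*(ς₁ q)^3 + 2*σ) / (3*((ς₁ q)^3 + 2*σ)) < 0) ∧
    StrictAnti (fun q => ς₁ q - q/3) := by
  have hderiv : ∀ q, HasDerivAt (fun q => ς₁ q - q/3)
      (-((1 - 3*k)*(ς₁ q)^3 + 2*σ) / (3*((ς₁ q)^3 + 2*σ))) q := fun q => by
    rw [← slope_sub_third_eq hσ (hpos q)]
    exact (hasDerivAt_of_pos_root hk hσ hpos hroot q).sub ((hasDerivAt_id q).div_const 3)
  have hneg := fun q => slope_sub_third_neg hk' hσ (hpos q)
  exact ⟨fun q => ⟨hderiv q, hneg q⟩, strictAnti_of_hasDerivAt_neg hderiv hneg⟩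
end

section
/- Along the positive branch of ς³ + (1 - k·q)·ς² = σ, one has ς̄¹(q, σ) → -∞ as q → +∞, where ς̄¹(q, σ) = ς¹(q, σ) - q/3. -/
/-! The cubic `s^3 + (1 - k q) s^2 = σ` reads `s^2 (s - a) = σ` with `a = k q - 1`; for `a ≥ 1` every root
lies within `σ` of `a`, so `ς₁ q - q/3` is at most `(k - 1/3) q + σ - 1`, which tends to `-∞`
because `k < 1/3`. -/

lemma le_add_of_sq_mul_sub_eq {a s σ : ℝ} (ha : 1 ≤ a) (hσ : 0 ≤ σ) (h : s ^ 2 * (s - a) = σ) :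
    s ≤ a + σ := by
  rcases le_or_gt s a with hsa | has
  · linarith
  · have hs2 : 1 ≤ s ^ 2 := one_le_pow₀ (by linarith)
    nlinarith

theorem stmt_14_general (k σ : ℝ) (hk : 0 < k) (hk' : k < 1/3) (hσ : 0 < σ)
    (ς₁ : ℝ → ℝ)
    (hroot : ∀ q, (ς₁ q)^3 + (1 - k*q)*(ς₁ q)^2 - σ = 0) :
    Filter.Tendsto (fun q => ς₁ q - q/3) Filter.atTop Filter.atBot := by
  have hbound : Filter.Tendsto (fun q : ℝ => (k - 1/3) * q + (σ - 1)) Filter.atTop Filter.atBot :=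
    Filter.tendsto_atBot_add_const_right _ _ <|
      Filter.tendsto_id.const_mul_atTop_of_neg (by linarith)
  refine Filter.tendsto_atBot_mono' _ ?_ hbound
  filter_upwards [Filter.eventually_ge_atTop (2 / k)] with q hq
  have hkq : 2 ≤ k * q := by rwa [div_le_iff₀ hk, mul_comm] at hq
  have hle : ς₁ q ≤ (k * q - 1) + σ :=
    le_add_of_sq_mul_sub_eq (by linarith) hσ.le (by linear_combination hroot q)
  linarith

theorem stmt_14 (k σ : ℝ) (hk : 0 < k) (hk' : k < 1/3) (hσ : 0 < σ)
    (ς₁ : ℝ → ℝ)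
    (hpos : ∀ q, 0 < ς₁ q)
    (hroot : ∀ q, (ς₁ q)^3 + (1 - k*q)*(ς₁ q)^2 - σ = 0) :
    Filter.Tendsto (fun q => ς₁ q - q/3) Filter.atTop Filter.atBot :=
  stmt_14_general k σ hk hk' hσ ς₁ hroot
end

section
/- For any σ₁, σ₂, σ₃ > 0 and 0 < k < 1/3, the coupled cubic system ςᵢ³ + ςᵢ² - k·(ς₁ + ς₂ + ς₃)·ςᵢ² = σᵢ, i = 1, 2, 3, has exactly one solution (ς₁, ς₂, ς₃) with all three components positive. -/
/-!
Put `S = ς₁ + ς₂ + ς₃`, so that the `i`-th equation reads `ςᵢ³ + (1 - kS) ςᵢ² = σᵢ`. For `σ > 0` and any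
real `c` the cubic `x³ + c x² = σ` has exactly one positive root `r_σ(c)`, and `c ↦ r_σ(c)` is
`1`-Lipschitz. Hence `S ↦ ∑ᵢ r_{σᵢ}(1 - kS)` is a contraction with constant `3k < 1`, positive solutions
of the system correspond to its fixed points, and Banach's fixed point theorem gives exactly one.
-/

open Function

section PosCubicRoot

variable {σ : ℝ}

theorem exists_pos_cubic_root (hσ : 0 < σ) (c : ℝ) : ∃ x, 0 < x ∧ x ^ 3 + c * x ^ 2 = σ := by
  set b := |c| + σ + 1
  have hb : 1 ≤ b := by linarith [abs_nonneg c]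
  have hcb : σ + 1 ≤ b + c := by linarith [neg_abs_le c]
  have hfb : σ < b ^ 3 + c * b ^ 2 := by nlinarith [sq_nonneg b, sq_nonneg (b - 1)]
  obtain ⟨x, hx, hfx⟩ := intermediate_value_Ioo (by linarith : (0 : ℝ) ≤ b)
    (by fun_prop : ContinuousOn (fun x : ℝ => x ^ 3 + c * x ^ 2) (Set.Icc 0 b))
    ⟨by simpa using hσ, hfb⟩
  exact ⟨x, hx.1, hfx⟩

theorem abs_sub_le_of_cubic_eq {x x' c c' : ℝ} (hσ : 0 < σ) (hx : 0 < x) (hx' : 0 < x')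
    (h : x ^ 3 + c * x ^ 2 = σ) (h' : x' ^ 3 + c' * x' ^ 2 = σ) : |x - x'| ≤ |c - c'| := by
  wlog hc : c' ≤ c generalizing x x' c c'
  · rw [abs_sub_comm, abs_sub_comm c]
    exact this hx' hx h' h (le_of_not_ge hc)
  have hx'c' : 0 < x' + c' := by nlinarith [pow_pos hx' 2]
  -- `x' - x = (c - c') * q` with `q = x ^ 2 / (x ^ 2 + (x' + x) * (x' + c')) ∈ (0, 1)`
  have hid : (x' - x) * (x ^ 2 + (x' + x) * (x' + c')) = (c - c') * x ^ 2 := by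
    linear_combination h' - h
  have hgt : x ^ 2 < x ^ 2 + (x' + x) * (x' + c') := by nlinarith
  have hnonneg : 0 ≤ x' - x := by nlinarith [pow_pos hx 2]
  have hle : x' - x ≤ c - c' := by nlinarith [pow_pos hx 2]
  rw [abs_of_nonpos (by linarith), abs_of_nonneg (by linarith)]
  linarith

noncomputable def posCubicRoot (σ c : ℝ) : ℝ :=
  if h : 0 < σ then (exists_pos_cubic_root h c).choose else 0

theorem posCubicRoot_pos (hσ : 0 < σ) (c : ℝ) : 0 < posCubicRoot σ c := by
  rw [posCubicRoot, dif_pos hσ]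
  exact (exists_pos_cubic_root hσ c).choose_spec.1

theorem posCubicRoot_cubic (hσ : 0 < σ) (c : ℝ) :
    posCubicRoot σ c ^ 3 + c * posCubicRoot σ c ^ 2 = σ := by
  rw [posCubicRoot, dif_pos hσ]
  exact (exists_pos_cubic_root hσ c).choose_spec.2

theorem abs_posCubicRoot_sub_le (hσ : 0 < σ) (c c' : ℝ) :
    |posCubicRoot σ c - posCubicRoot σ c'| ≤ |c - c'| :=
  abs_sub_le_of_cubic_eq hσ (posCubicRoot_pos hσ c) (posCubicRoot_pos hσ c')
    (posCubicRoot_cubic hσ c) (posCubicRoot_cubic hσ c')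

theorem eq_posCubicRoot (hσ : 0 < σ) {x c : ℝ} (hx : 0 < x) (h : x ^ 3 + c * x ^ 2 = σ) :
    x = posCubicRoot σ c := by
  have := abs_sub_le_of_cubic_eq hσ hx (posCubicRoot_pos hσ c) h (posCubicRoot_cubic hσ c)
  rwa [sub_self, abs_zero, abs_nonpos_iff, sub_eq_zero] at this

end PosCubicRoot

section System

variable {ι : Type*} [Fintype ι] {σ : ι → ℝ} {k : ℝ}

noncomputable def rootSum (σ : ι → ℝ) (k S : ℝ) : ℝ :=
  ∑ i, posCubicRoot (σ i) (1 - k * S)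

theorem contractingWith_rootSum (hσ : ∀ i, 0 < σ i) (hk : |k| * Fintype.card ι < 1) :
    ContractingWith (‖k‖₊ * Fintype.card ι) (rootSum σ k) := by
  refine ⟨by rw [← NNReal.coe_lt_coe]; simpa using hk, LipschitzWith.of_dist_le_mul fun S T => ?_⟩
  simp only [Real.dist_eq, rootSum, ← Finset.sum_sub_distrib]
  calc |∑ i, (posCubicRoot (σ i) (1 - k * S) - posCubicRoot (σ i) (1 - k * T))|
      ≤ ∑ i, |posCubicRoot (σ i) (1 - k * S) - posCubicRoot (σ i) (1 - k * T)| :=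
        Finset.abs_sum_le_sum_abs _ _
    _ ≤ ∑ _i : ι, |k| * |S - T| := Finset.sum_le_sum fun i _ => by
        rw [← abs_mul, show k * (S - T) = (1 - k * T) - (1 - k * S) by ring, abs_sub_comm]
        exact abs_posCubicRoot_sub_le (hσ i) _ _
    _ = _ := by
        rw [Finset.sum_const, Finset.card_univ, nsmul_eq_mul]
        push_cast
        rw [Real.norm_eq_abs]
        ring

theorem existsUnique_pos_solution (hσ : ∀ i, 0 < σ i) (hk : |k| * Fintype.card ι < 1) :
    ∃! x : ι → ℝ, (∀ i, 0 < x i) ∧ ∀ i, x i ^ 3 + x i ^ 2 - k * (∑ j, x j) * x i ^ 2 = σ i := by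
  have hK := contractingWith_rootSum hσ hk
  have hS : IsFixedPt (rootSum σ k) (hK.fixedPoint _) := hK.fixedPoint_isFixedPt
  set S := hK.fixedPoint _
  refine ⟨fun i => posCubicRoot (σ i) (1 - k * S),
    ⟨fun i => posCubicRoot_pos (hσ i) _, fun i => ?_⟩, ?_⟩
  · rw [show ∑ j, posCubicRoot (σ j) (1 - k * S) = S from hS]
    linear_combination posCubicRoot_cubic (hσ i) (1 - k * S)
  · rintro x ⟨hpos, hx⟩
    have hroot : ∀ i, x i = posCubicRoot (σ i) (1 - k * ∑ j, x j) := fun i =>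
      eq_posCubicRoot (hσ i) (hpos i) (by linear_combination hx i)
    have hfix : IsFixedPt (rootSum σ k) (∑ j, x j) :=
      Finset.sum_congr rfl fun i _ => (hroot i).symm
    rw [hK.fixedPoint_unique' hfix hS] at hroot
    exact funext hroot

end System

theorem stmt_18 (k σ₁ σ₂ σ₃ : ℝ) (hk : 0 < k) (hk' : k < 1/3)
    (h1 : 0 < σ₁) (h2 : 0 < σ₂) (h3 : 0 < σ₃) :
    ∃! s : ℝ × ℝ × ℝ,
      (0 < s.1 ∧ 0 < s.2.1 ∧ 0 < s.2.2) ∧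
      s.1^3 + s.1^2 - k*(s.1 + s.2.1 + s.2.2)*s.1^2 = σ₁ ∧
      s.2.1^3 + s.2.1^2 - k*(s.1 + s.2.1 + s.2.2)*s.2.1^2 = σ₂ ∧
      s.2.2^3 + s.2.2^2 - k*(s.1 + s.2.1 + s.2.2)*s.2.2^2 = σ₃ := by
  have hσ : ∀ i, 0 < ![σ₁, σ₂, σ₃] i := by simp [Fin.forall_fin_succ, h1, h2, h3]
  have hk3 : |k| * Fintype.card (Fin 3) < 1 := by
    rw [abs_of_pos hk, Fintype.card_fin]; push_cast; linarith
  obtain ⟨x, ⟨hpos, hx⟩, huniq⟩ := existsUnique_pos_solution hσ hk3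
  simp only [Fin.sum_univ_three] at hx huniq
  refine ⟨(x 0, x 1, x 2), ⟨⟨hpos 0, hpos 1, hpos 2⟩, hx 0, hx 1, hx 2⟩, ?_⟩
  rintro ⟨a, b, c⟩ ⟨⟨ha, hb, hc⟩, e₁, e₂, e₃⟩
  have hx_eq := huniq ![a, b, c] ⟨by simp [Fin.forall_fin_succ, ha, hb, hc],
    by simpa [Fin.forall_fin_succ] using ⟨e₁, e₂, e₃⟩⟩
  simp [← hx_eq]
end

section
/- For any 0 < σ₁, σ₂, σ₃ < 4/27 and 0 < k < 1/3, the coupled cubic system ςᵢ³ + ςᵢ² - k·(ς₁ + ς₂ + ς₃)·ςᵢ² = σᵢ, i = 1, 2, 3, has at least eight distinct solutions (ς₁, ς₂, ς₃) with all three components negative. -/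
set_option maxHeartbeats 1000000
open Set


open Classical in
noncomputable def rootm (σ a : ℝ) : ℝ :=
  if h : ∃ x ∈ Set.Icc (-a) (-(2*a/3)), x^3 + a*x^2 = σ then h.choose else 0

open Classical in
noncomputable def rootp (σ a : ℝ) : ℝ :=
  if h : ∃ x ∈ Set.Icc (-(2*a/3)) 0, x^3 + a*x^2 = σ then h.choose else 0

lemma phi_deriv (a x : ℝ) : HasDerivAt (fun x => x^3 + a*x^2) (3*x^2 + a*(2*x)) x := by
  have h1 := hasDerivAt_pow 3 x
  have h2 := (hasDerivAt_pow 2 x).const_mul a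
  have := h1.add h2
  exact this.congr_deriv (by norm_num)

lemma monoM {a : ℝ} (ha : 0 < a) :
    StrictMonoOn (fun x : ℝ => x^3 + a*x^2) (Icc (-a) (-(2*a/3))) := by
  apply strictMonoOn_of_deriv_pos (convex_Icc _ _)
  · fun_prop
  · intro x hx
    rw [interior_Icc, mem_Ioo] at hx
    rw [(phi_deriv a x).deriv]
    have hx0 : x < 0 := by nlinarith [hx.2]
    nlinarith [mul_pos (neg_pos.mpr hx0) (by nlinarith [hx.2] : (0:ℝ) < -(3*x+2*a))]

lemma antiP {a : ℝ} (ha : 0 < a) :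
    StrictAntiOn (fun x : ℝ => x^3 + a*x^2) (Icc (-(2*a/3)) 0) := by
  apply strictAntiOn_of_deriv_neg (convex_Icc _ _)
  · fun_prop
  · intro x hx
    rw [interior_Icc, mem_Ioo] at hx
    rw [(phi_deriv a x).deriv]
    nlinarith [mul_pos (neg_pos.mpr hx.2) (by nlinarith [hx.1] : (0:ℝ) < 3*x+2*a)]


section
variable {a σ : ℝ}

lemma exM (ha : 1 ≤ a) (h1 : 0 < σ) (h2 : σ < 4/27) :
    ∃ x ∈ Icc (-a) (-(2*a/3)), x^3 + a*x^2 = σ := by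
  have hc : ContinuousOn (fun x : ℝ => x^3 + a*x^2) (Icc (-a) (-(2*a/3))) := by fun_prop
  have hle : -a ≤ -(2*a/3) := by linarith
  have hsub := intermediate_value_Icc hle hc
  have hmem : σ ∈ Icc ((-a)^3 + a*(-a)^2) ((-(2*a/3))^3 + a*(-(2*a/3))^2) := by
    constructor
    · nlinarith
    · nlinarith [sq_nonneg (a-1), sq_nonneg (a+1)]
  obtain ⟨x, hx, hfx⟩ := hsub hmem
  exact ⟨x, hx, hfx⟩

lemma exP (ha : 1 ≤ a) (h1 : 0 < σ) (h2 : σ < 4/27) :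
    ∃ x ∈ Icc (-(2*a/3)) 0, x^3 + a*x^2 = σ := by
  have hc : ContinuousOn (fun x : ℝ => x^3 + a*x^2) (Icc (-(2*a/3)) 0) := by fun_prop
  have hle : -(2*a/3) ≤ (0:ℝ) := by linarith
  have hsub := intermediate_value_Icc' hle hc
  have hmem : σ ∈ Icc ((0:ℝ)^3 + a*(0:ℝ)^2) ((-(2*a/3))^3 + a*(-(2*a/3))^2) := by
    constructor
    · nlinarith
    · nlinarith [sq_nonneg (a-1), sq_nonneg (a+1)]
  obtain ⟨x, hx, hfx⟩ := hsub hmem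
  exact ⟨x, hx, hfx⟩
end




section
variable {a σ : ℝ}

lemma rootm_spec (ha : 1 ≤ a) (h1 : 0 < σ) (h2 : σ < 4/27) :
    rootm σ a ∈ Icc (-a) (-(2*a/3)) ∧ (rootm σ a)^3 + a*(rootm σ a)^2 = σ := by
  have h := exM ha h1 h2
  rw [rootm, dif_pos h]
  exact h.choose_spec

lemma rootp_spec (ha : 1 ≤ a) (h1 : 0 < σ) (h2 : σ < 4/27) :
    rootp σ a ∈ Icc (-(2*a/3)) 0 ∧ (rootp σ a)^3 + a*(rootp σ a)^2 = σ := by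
  have h := exP ha h1 h2
  rw [rootp, dif_pos h]
  exact h.choose_spec

lemma rootm_bounds (ha : 1 ≤ a) (h1 : 0 < σ) (h2 : σ < 4/27) :
    -a < rootm σ a ∧ rootm σ a < -(2*a/3) := by
  obtain ⟨hmem, heq⟩ := rootm_spec ha h1 h2
  constructor
  · rcases eq_or_lt_of_le hmem.1 with h | h
    · exfalso; rw [← h] at heq; nlinarith
    · exact h
  · rcases eq_or_lt_of_le hmem.2 with h | h
    · exfalso; rw [h] at heq; nlinarith [sq_nonneg (a-1), sq_nonneg (a+1)]
    · exact h

lemma rootm_lt (ha : 1 ≤ a) (h1 : 0 < σ) (h2 : σ < 4/27) : rootm σ a < -(2/3) := by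
  have := (rootm_bounds ha h1 h2).2
  linarith

lemma rootp_bounds (ha : 1 ≤ a) (h1 : 0 < σ) (h2 : σ < 4/27) :
    -(2*a/3) < rootp σ a ∧ rootp σ a < 0 := by
  obtain ⟨hmem, heq⟩ := rootp_spec ha h1 h2
  constructor
  · rcases eq_or_lt_of_le hmem.1 with h | h
    · exfalso; rw [← h] at heq; nlinarith [sq_nonneg (a-1), sq_nonneg (a+1)]
    · exact h
  · rcases eq_or_lt_of_le hmem.2 with h | h
    · exfalso; rw [h] at heq; nlinarith
    · exact h

lemma rootp_gt (ha : 1 ≤ a) (h1 : 0 < σ) (h2 : σ < 4/27) : -(2/3) < rootp σ a := by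
  obtain ⟨hmem, heq⟩ := rootp_spec ha h1 h2
  by_contra hle
  push_neg at hle
  have hm : (-(2/3) : ℝ) ∈ Icc (-(2*a/3)) (0:ℝ) := by
    constructor <;> norm_num <;> linarith
  have := (antiP (by linarith : (0:ℝ) < a)).antitoneOn hmem hm hle
  nlinarith
end




lemma rootm_cont {k σ : ℝ} (hk : 0 < k) (h1 : 0 < σ) (h2 : σ < 4/27) :
    ContinuousOn (fun t => rootm σ (1 - k*t)) (Iic (0:ℝ)) := by
  intro t₀ ht₀
  rw [mem_Iic] at ht₀
  rw [Metric.continuousWithinAt_iff]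
  intro ε hε
  set a₀ := 1 - k*t₀ with ha₀def
  have ha₀ : 1 ≤ a₀ := by nlinarith
  have ha₀' : (0:ℝ) < a₀ := by linarith
  set r₀ := rootm σ a₀ with hr₀def
  obtain ⟨hr₀mem, hr₀eq⟩ := rootm_spec ha₀ h1 h2
  obtain ⟨hr₀l, hr₀r⟩ := rootm_bounds ha₀ h1 h2
  set ε₁ := min ε (min ((r₀ + a₀)/2) ((-(2*a₀/3) - r₀)/2)) with hε₁def
  have hε₁ : 0 < ε₁ := by
    apply lt_min hε
    apply lt_min <;> linarith
  set xm := r₀ - ε₁ with hxmdef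
  set xp := r₀ + ε₁ with hxpdef
  have hxm1 : -a₀ < xm := by
    have : ε₁ ≤ (r₀ + a₀)/2 := le_trans (min_le_right _ _) (min_le_left _ _)
    simp only [hxmdef]; linarith
  have hxp1 : xp < -(2*a₀/3) := by
    have : ε₁ ≤ (-(2*a₀/3) - r₀)/2 := le_trans (min_le_right _ _) (min_le_right _ _)
    simp only [hxpdef]; linarith
  have hxmmem : xm ∈ Icc (-a₀) (-(2*a₀/3)) := ⟨le_of_lt hxm1, by linarith⟩
  have hxpmem : xp ∈ Icc (-a₀) (-(2*a₀/3)) := ⟨by linarith, le_of_lt hxp1⟩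
  have hfm : xm^3 + a₀*xm^2 < σ := by
    have := monoM ha₀' hxmmem hr₀mem (by simp only [hxmdef]; linarith)
    simp only at this; linarith [hr₀eq]
  have hfp : σ < xp^3 + a₀*xp^2 := by
    have := monoM ha₀' hr₀mem hxpmem (by simp only [hxpdef]; linarith)
    simp only at this; linarith [hr₀eq]
  set m := min (σ - (xm^3 + a₀*xm^2)) ((xp^3 + a₀*xp^2) - σ) with hmdef
  have hm : 0 < m := lt_min (by linarith) (by linarith)
  set c₂ := (-(3*xp) - 2*a₀)/2 with hc₂def
  have hc₂ : 0 < c₂ := by simp only [hc₂def]; linarith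
  clear_value m c₂ xp xm ε₁ r₀ a₀
  refine ⟨min (m/(k*a₀^2)) (min ((xm + a₀)/k) (c₂/k)), ?_, ?_⟩
  · exact lt_min (div_pos hm (by positivity)) (lt_min (div_pos (by linarith) hk) (div_pos hc₂ hk))
  intro t ht hdist
  rw [mem_Iic] at ht
  rw [Real.dist_eq] at hdist
  set a := 1 - k*t with hadef
  have ha : 1 ≤ a := by nlinarith
  have ha' : (0:ℝ) < a := by linarith
  clear_value a
  have hδ1 : |t - t₀| < m/(k*a₀^2) := lt_of_lt_of_le hdist (min_le_left _ _)
  have hδ2 : |t - t₀| < (xm + a₀)/k := lt_of_lt_of_le hdist (le_trans (min_le_right _ _) (min_le_left _ _))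
  have hδ3 : |t - t₀| < c₂/k := lt_of_lt_of_le hdist (le_trans (min_le_right _ _) (min_le_right _ _))
  have habs : |a - a₀| = k * |t - t₀| := by
    have h : a - a₀ = -(k * (t - t₀)) := by simp only [hadef, ha₀def]; ring
    rw [h, abs_neg, abs_mul, abs_of_pos hk]
  have haa1 : |a - a₀| < xm + a₀ := by
    rw [habs]
    calc k * |t - t₀| < k * ((xm + a₀)/k) := by exact (mul_lt_mul_iff_right₀ hk).mpr hδ2
    _ = xm + a₀ := by field_simp
  have haa2 : |a - a₀| < c₂ := by
    rw [habs]
    calc k * |t - t₀| < k * (c₂/k) := by exact (mul_lt_mul_iff_right₀ hk).mpr hδ3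
    _ = c₂ := by field_simp
  have haa3 : |a - a₀| * a₀^2 < m := by
    rw [habs]
    have : k * |t - t₀| < k * (m/(k*a₀^2)) := (mul_lt_mul_iff_right₀ hk).mpr hδ1
    calc k * |t - t₀| * a₀^2 < k * (m/(k*a₀^2)) * a₀^2 :=
          mul_lt_mul_of_pos_right this (by positivity)
    _ = m := by field_simp
  -- bounds relating a and a₀
  have hal : a₀ - a ≤ |a - a₀| := by rw [abs_sub_comm]; exact le_abs_self _
  have hau : a - a₀ ≤ |a - a₀| := le_abs_self _
  have hxm_ge : -a < xm := by linarith
  have hxp_le : xp < -(2*a/3) := by simp only [hc₂def] at haa2; linarith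
  have hxmmem' : xm ∈ Icc (-a) (-(2*a/3)) := ⟨le_of_lt hxm_ge, by linarith⟩
  have hxpmem' : xp ∈ Icc (-a) (-(2*a/3)) := ⟨by linarith, le_of_lt hxp_le⟩
  -- perturbation bounds
  have hxm_sq : xm^2 ≤ a₀^2 := by nlinarith [mul_pos (by linarith [hxm1] : (0:ℝ) < a₀ + xm) (by linarith [hxmmem.2] : (0:ℝ) < a₀ - xm)]
  have hxp_sq : xp^2 ≤ a₀^2 := by nlinarith [mul_pos (by linarith [hxpmem.1] : (0:ℝ) < a₀ + xp) (by linarith [hxp1] : (0:ℝ) < a₀ - xp)]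
  have hpert_m : xm^3 + a*xm^2 < σ := by
    have h : xm^3 + a*xm^2 - (xm^3 + a₀*xm^2) = (a - a₀) * xm^2 := by ring
    have hb : (a - a₀) * xm^2 ≤ |a - a₀| * a₀^2 := by
      calc (a - a₀) * xm^2 ≤ |a - a₀| * xm^2 := mul_le_mul_of_nonneg_right hau (sq_nonneg xm)
      _ ≤ |a - a₀| * a₀^2 := mul_le_mul_of_nonneg_left hxm_sq (abs_nonneg _)
    have hmm : m ≤ σ - (xm^3 + a₀*xm^2) := by rw [hmdef]; exact min_le_left _ _
    linarith
  have hpert_p : σ < xp^3 + a*xp^2 := by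
    have hb : (a₀ - a) * xp^2 ≤ |a - a₀| * a₀^2 := by
      calc (a₀ - a) * xp^2 ≤ |a - a₀| * xp^2 := mul_le_mul_of_nonneg_right hal (sq_nonneg xp)
      _ ≤ |a - a₀| * a₀^2 := mul_le_mul_of_nonneg_left hxp_sq (abs_nonneg _)
    have hmm : m ≤ (xp^3 + a₀*xp^2) - σ := by rw [hmdef]; exact min_le_right _ _
    have h : xp^3 + a*xp^2 = (xp^3 + a₀*xp^2) - (a₀ - a)*xp^2 := by ring
    linarith
  -- sandwich
  obtain ⟨hrmem, hreq⟩ := rootm_spec ha h1 h2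
  set r := rootm σ a with hrdef
  have hleft : xm < r := by
    by_contra hcon
    push_neg at hcon
    have := (monoM ha').monotoneOn hrmem hxmmem' hcon
    linarith [hreq]
  have hright : r < xp := by
    by_contra hcon
    push_neg at hcon
    have := (monoM ha').monotoneOn hxpmem' hrmem hcon
    linarith [hreq]
  have : |r - r₀| < ε₁ := by
    rw [abs_lt]
    constructor <;> simp only [hxmdef, hxpdef] at hleft hright <;> linarith
  have hε₁ε : ε₁ ≤ ε := by rw [hε₁def]; exact min_le_left _ _
  rw [Real.dist_eq]
  linarith [abs_lt.mp this]




lemma rootp_cont {k σ : ℝ} (hk : 0 < k) (h1 : 0 < σ) (h2 : σ < 4/27) :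
    ContinuousOn (fun t => rootp σ (1 - k*t)) (Iic (0:ℝ)) := by
  intro t₀ ht₀
  rw [mem_Iic] at ht₀
  rw [Metric.continuousWithinAt_iff]
  intro ε hε
  set a₀ := 1 - k*t₀ with ha₀def
  have ha₀ : 1 ≤ a₀ := by nlinarith
  have ha₀' : (0:ℝ) < a₀ := by linarith
  set r₀ := rootp σ a₀ with hr₀def
  obtain ⟨hr₀mem, hr₀eq⟩ := rootp_spec ha₀ h1 h2
  obtain ⟨hr₀l, hr₀r⟩ := rootp_bounds ha₀ h1 h2
  set ε₁ := min ε (min ((r₀ + 2*a₀/3)/2) ((-r₀)/2)) with hε₁def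
  have hε₁ : 0 < ε₁ := by
    apply lt_min hε
    apply lt_min <;> linarith
  set xm := r₀ - ε₁ with hxmdef
  set xp := r₀ + ε₁ with hxpdef
  have hxm1 : -(2*a₀/3) < xm := by
    have : ε₁ ≤ (r₀ + 2*a₀/3)/2 := le_trans (min_le_right _ _) (min_le_left _ _)
    simp only [hxmdef]; linarith
  have hxp1 : xp < 0 := by
    have : ε₁ ≤ (-r₀)/2 := le_trans (min_le_right _ _) (min_le_right _ _)
    simp only [hxpdef]; linarith
  have hxmmem : xm ∈ Icc (-(2*a₀/3)) 0 := ⟨le_of_lt hxm1, by linarith⟩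
  have hxpmem : xp ∈ Icc (-(2*a₀/3)) 0 := ⟨by linarith, le_of_lt hxp1⟩
  have hfm : σ < xm^3 + a₀*xm^2 := by
    have := antiP ha₀' hxmmem hr₀mem (by simp only [hxmdef]; linarith)
    simp only at this; linarith [hr₀eq]
  have hfp : xp^3 + a₀*xp^2 < σ := by
    have := antiP ha₀' hr₀mem hxpmem (by simp only [hxpdef]; linarith)
    simp only at this; linarith [hr₀eq]
  set m := min ((xm^3 + a₀*xm^2) - σ) (σ - (xp^3 + a₀*xp^2)) with hmdef
  have hm : 0 < m := lt_min (by linarith) (by linarith)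
  set c₂ := (2*a₀ + 3*xm)/2 with hc₂def
  have hc₂ : 0 < c₂ := by simp only [hc₂def]; linarith
  clear_value m c₂ xp xm ε₁ r₀ a₀
  refine ⟨min (m/(k*a₀^2)) (c₂/k), ?_, ?_⟩
  · exact lt_min (div_pos hm (by positivity)) (div_pos hc₂ hk)
  intro t ht hdist
  rw [mem_Iic] at ht
  rw [Real.dist_eq] at hdist
  set a := 1 - k*t with hadef
  have ha : 1 ≤ a := by nlinarith
  have ha' : (0:ℝ) < a := by linarith
  clear_value a
  have hδ1 : |t - t₀| < m/(k*a₀^2) := lt_of_lt_of_le hdist (min_le_left _ _)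
  have hδ3 : |t - t₀| < c₂/k := lt_of_lt_of_le hdist (min_le_right _ _)
  have habs : |a - a₀| = k * |t - t₀| := by
    have h : a - a₀ = -(k * (t - t₀)) := by simp only [hadef, ha₀def]; ring
    rw [h, abs_neg, abs_mul, abs_of_pos hk]
  have haa2 : |a - a₀| < c₂ := by
    rw [habs]
    calc k * |t - t₀| < k * (c₂/k) := by exact (mul_lt_mul_iff_right₀ hk).mpr hδ3
    _ = c₂ := by field_simp
  have haa3 : |a - a₀| * a₀^2 < m := by
    rw [habs]
    have : k * |t - t₀| < k * (m/(k*a₀^2)) := (mul_lt_mul_iff_right₀ hk).mpr hδ1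
    calc k * |t - t₀| * a₀^2 < k * (m/(k*a₀^2)) * a₀^2 :=
          mul_lt_mul_of_pos_right this (by positivity)
    _ = m := by field_simp
  have hal : a₀ - a ≤ |a - a₀| := by rw [abs_sub_comm]; exact le_abs_self _
  have hau : a - a₀ ≤ |a - a₀| := le_abs_self _
  have hxm_ge : -(2*a/3) < xm := by simp only [hc₂def] at haa2; linarith
  have hxmmem' : xm ∈ Icc (-(2*a/3)) 0 := ⟨le_of_lt hxm_ge, by linarith⟩
  have hxpmem' : xp ∈ Icc (-(2*a/3)) 0 := ⟨by linarith, le_of_lt hxp1⟩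
  have hxm_sq : xm^2 ≤ a₀^2 := by nlinarith [mul_pos (by linarith [hxm1] : (0:ℝ) < a₀ + xm) (by linarith [hxmmem.2] : (0:ℝ) < a₀ - xm)]
  have hxp_sq : xp^2 ≤ a₀^2 := by nlinarith [mul_pos (by linarith [hxm1] : (0:ℝ) < a₀ + xp) (by linarith [hxp1] : (0:ℝ) < a₀ - xp)]
  have hpert_m : σ < xm^3 + a*xm^2 := by
    have hb : (a₀ - a) * xm^2 ≤ |a - a₀| * a₀^2 := by
      calc (a₀ - a) * xm^2 ≤ |a - a₀| * xm^2 := mul_le_mul_of_nonneg_right hal (sq_nonneg xm)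
      _ ≤ |a - a₀| * a₀^2 := mul_le_mul_of_nonneg_left hxm_sq (abs_nonneg _)
    have hmm : m ≤ (xm^3 + a₀*xm^2) - σ := by rw [hmdef]; exact min_le_left _ _
    have h : xm^3 + a*xm^2 = (xm^3 + a₀*xm^2) - (a₀ - a)*xm^2 := by ring
    linarith
  have hpert_p : xp^3 + a*xp^2 < σ := by
    have hb : (a - a₀) * xp^2 ≤ |a - a₀| * a₀^2 := by
      calc (a - a₀) * xp^2 ≤ |a - a₀| * xp^2 := mul_le_mul_of_nonneg_right hau (sq_nonneg xp)
      _ ≤ |a - a₀| * a₀^2 := mul_le_mul_of_nonneg_left hxp_sq (abs_nonneg _)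
    have hmm : m ≤ σ - (xp^3 + a₀*xp^2) := by rw [hmdef]; exact min_le_right _ _
    have h : xp^3 + a*xp^2 = (xp^3 + a₀*xp^2) + (a - a₀)*xp^2 := by ring
    linarith
  obtain ⟨hrmem, hreq⟩ := rootp_spec ha h1 h2
  set r := rootp σ a with hrdef
  have hleft : xm < r := by
    by_contra hcon
    push_neg at hcon
    have := (antiP ha').antitoneOn hrmem hxmmem' hcon
    linarith [hreq]
  have hright : r < xp := by
    by_contra hcon
    push_neg at hcon
    have := (antiP ha').antitoneOn hxpmem' hrmem hcon
    linarith [hreq]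
  have hfin : |r - r₀| < ε₁ := by
    rw [abs_lt]
    constructor <;> simp only [hxmdef, hxpdef] at hleft hright <;> linarith
  have hε₁ε : ε₁ ≤ ε := by rw [hε₁def]; exact min_le_left _ _
  rw [Real.dist_eq]
  linarith [abs_lt.mp hfin]


noncomputable def gg (k : ℝ) (b : Bool) (σ t : ℝ) : ℝ :=
  if b then rootm σ (1 - k*t) else rootp σ (1 - k*t)

lemma gg_cont {k σ : ℝ} (b : Bool) (hk : 0 < k) (h1 : 0 < σ) (h2 : σ < 4/27) :
    ContinuousOn (fun t => gg k b σ t) (Iic (0:ℝ)) := by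
  cases b
  · simpa [gg] using rootp_cont hk h1 h2
  · simpa [gg] using rootm_cont hk h1 h2

lemma gg_props {k σ t : ℝ} (b : Bool) (hk : 0 < k) (h1 : 0 < σ) (h2 : σ < 4/27)
    (ht : t ≤ 0) :
    (gg k b σ t)^3 + (1 - k*t)*(gg k b σ t)^2 = σ ∧
    -(1 - k*t) < gg k b σ t ∧ gg k b σ t < 0 ∧
    (b = true ↔ gg k b σ t < -(2/3)) := by
  have ha : 1 ≤ 1 - k*t := by nlinarith
  cases b
  · obtain ⟨hb1, hb2⟩ := rootp_bounds ha h1 h2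
    refine ⟨(rootp_spec ha h1 h2).2, by simp [gg]; linarith, by simpa [gg] using hb2, ?_⟩
    simp [gg]
    linarith [rootp_gt ha h1 h2]
  · obtain ⟨hb1, hb2⟩ := rootm_bounds ha h1 h2
    refine ⟨(rootm_spec ha h1 h2).2, by simpa [gg] using hb1, by simp [gg]; linarith, ?_⟩
    simp [gg]
    linarith [rootm_lt ha h1 h2]

lemma solExists {k σ₁ σ₂ σ₃ : ℝ} (hk : 0 < k) (hk' : k < 1/3)
    (h1 : 0 < σ₁) (h1' : σ₁ < 4/27)
    (h2 : 0 < σ₂) (h2' : σ₂ < 4/27)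
    (h3 : 0 < σ₃) (h3' : σ₃ < 4/27) (b : Bool × Bool × Bool) :
    ∃ x : ℝ × ℝ × ℝ, (x.1 < 0 ∧ x.2.1 < 0 ∧ x.2.2 < 0) ∧
      (x.1^3 + x.1^2 - k*(x.1 + x.2.1 + x.2.2)*x.1^2 = σ₁ ∧
       x.2.1^3 + x.2.1^2 - k*(x.1 + x.2.1 + x.2.2)*x.2.1^2 = σ₂ ∧
       x.2.2^3 + x.2.2^2 - k*(x.1 + x.2.1 + x.2.2)*x.2.2^2 = σ₃) ∧
      ((b.1 = true ↔ x.1 < -(2/3)) ∧ (b.2.1 = true ↔ x.2.1 < -(2/3)) ∧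
       (b.2.2 = true ↔ x.2.2 < -(2/3))) := by
  have h3k : (0:ℝ) < 1 - 3*k := by linarith
  set L := 3/(1-3*k) with hLdef
  have hL : 0 < L := by positivity
  have hLeq : 3*(1 + k*L) = L := by
    rw [hLdef]; field_simp; ring
  set F := fun t => gg k b.1 σ₁ t + gg k b.2.1 σ₂ t + gg k b.2.2 σ₃ t - t with hFdef
  have hFc : ContinuousOn F (Icc (-L) 0) := by
    apply ContinuousOn.sub _ continuousOn_id
    exact ContinuousOn.mono
      (((gg_cont b.1 hk h1 h1').add (gg_cont b.2.1 hk h2 h2')).add (gg_cont b.2.2 hk h3 h3'))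
      (Icc_subset_Iic_self)
  have hF0 : F 0 < 0 := by
    obtain ⟨_, _, hn1, _⟩ := gg_props b.1 hk h1 h1' (le_refl (0:ℝ))
    obtain ⟨_, _, hn2, _⟩ := gg_props b.2.1 hk h2 h2' (le_refl (0:ℝ))
    obtain ⟨_, _, hn3, _⟩ := gg_props b.2.2 hk h3 h3' (le_refl (0:ℝ))
    simp only [hFdef]
    linarith
  have hFL : 0 < F (-L) := by
    have hL' : -L ≤ 0 := by linarith
    obtain ⟨_, hg1, _, _⟩ := gg_props b.1 hk h1 h1' hL'
    obtain ⟨_, hg2, _, _⟩ := gg_props b.2.1 hk h2 h2' hL'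
    obtain ⟨_, hg3, _, _⟩ := gg_props b.2.2 hk h3 h3' hL'
    simp only [hFdef]
    have heq : 1 - k*(-L) = 1 + k*L := by ring
    rw [heq] at hg1 hg2 hg3
    linarith
  have hsub := intermediate_value_Icc' (by linarith : -L ≤ (0:ℝ)) hFc
  have h0mem : (0:ℝ) ∈ Icc (F 0) (F (-L)) := ⟨le_of_lt hF0, le_of_lt hFL⟩
  obtain ⟨t, htmem, htF⟩ := hsub h0mem
  have ht0 : t ≤ 0 := htmem.2
  obtain ⟨he1, _, hn1, hs1⟩ := gg_props b.1 hk h1 h1' ht0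
  obtain ⟨he2, _, hn2, hs2⟩ := gg_props b.2.1 hk h2 h2' ht0
  obtain ⟨he3, _, hn3, hs3⟩ := gg_props b.2.2 hk h3 h3' ht0
  have hsum : gg k b.1 σ₁ t + gg k b.2.1 σ₂ t + gg k b.2.2 σ₃ t = t := by
    have hft : F t = 0 := htF
    simp only [hFdef] at hft
    linarith
  refine ⟨(gg k b.1 σ₁ t, gg k b.2.1 σ₂ t, gg k b.2.2 σ₃ t), ⟨hn1, hn2, hn3⟩, ?_, hs1, hs2, hs3⟩
  simp only
  rw [hsum]
  refine ⟨by linear_combination he1, by linear_combination he2, by linear_combination he3⟩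

theorem stmt_19 (k σ₁ σ₂ σ₃ : ℝ) (hk : 0 < k) (hk' : k < 1/3)
    (h1 : 0 < σ₁) (h1' : σ₁ < 4/27)
    (h2 : 0 < σ₂) (h2' : σ₂ < 4/27)
    (h3 : 0 < σ₃) (h3' : σ₃ < 4/27) :
    ∃ S : Finset (ℝ × ℝ × ℝ), S.card = 8 ∧
      ∀ s ∈ S, (s.1 < 0 ∧ s.2.1 < 0 ∧ s.2.2 < 0) ∧
        s.1^3 + s.1^2 - k*(s.1 + s.2.1 + s.2.2)*s.1^2 = σ₁ ∧
        s.2.1^3 + s.2.1^2 - k*(s.1 + s.2.1 + s.2.2)*s.2.1^2 = σ₂ ∧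
        s.2.2^3 + s.2.2^2 - k*(s.1 + s.2.1 + s.2.2)*s.2.2^2 = σ₃ := by
  classical
  choose sol hsol using solExists hk hk' h1 h1' h2 h2' h3 h3'
  have hinj : Function.Injective sol := by
    intro b b' h
    obtain ⟨sb1, sb2, sb3⟩ := (hsol b).2.2
    obtain ⟨sc1, sc2, sc3⟩ := (hsol b').2.2
    rw [h] at sb1 sb2 sb3
    have e1 : b.1 = b'.1 := Bool.eq_iff_iff.mpr (sb1.trans sc1.symm)
    have e2 : b.2.1 = b'.2.1 := Bool.eq_iff_iff.mpr (sb2.trans sc2.symm)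
    have e3 : b.2.2 = b'.2.2 := Bool.eq_iff_iff.mpr (sb3.trans sc3.symm)
    rcases b with ⟨b1, b2, b3⟩
    rcases b' with ⟨c1, c2, c3⟩
    simp only at e1 e2 e3
    simp [e1, e2, e3]
  refine ⟨Finset.image sol Finset.univ, ?_, ?_⟩
  · rw [Finset.card_image_of_injective _ hinj, Finset.card_univ]
    simp
  · intro s hs
    simp only [Finset.mem_image, Finset.mem_univ, true_and] at hs
    obtain ⟨b, rfl⟩ := hs
    exact ⟨(hsol b).1, (hsol b).2.1.1, (hsol b).2.1.2.1, (hsol b).2.1.2.2⟩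
end
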